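/- For an m×n matrix space over an infinite field k, every orbit of the group B_-(m) × B_+(n) (invertible lower triangular m×m matrices times invertible upper triangular n×n matrices, acting by (b, c)·M = b^{-1} M c, or equivalently by row/column operations) contains exactly one m×n partial permutation matrix. In particular, the number of such orbits is finite. -/

import Mathlib

/-- A partial permutation matrix: entries in `{0,1}`, at most one `1` in each row and
in each column. -/
def IsPartialPerm {k : Type} [Field k] {m n : ℕ} (w : Matrix (Fin m) (Fin n) k) : Prop :=
  (∀ i j, w i j = 0 ∨ w i j = 1) ∧
  (∀ i j j', w i j = 1 → w i j' = 1 → j = j') ∧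
  (∀ i i' j, w i j = 1 → w i' j = 1 → i = i')

/-- `M` and `N` are in the same orbit of `B_-(m) × B_+(n)` acting by `M ↦ b⁻¹ M c` with
`b` invertible lower triangular and `c` invertible upper triangular. -/
def SameBorbit {k : Type} [Field k] {m n : ℕ} (M N : Matrix (Fin m) (Fin n) k) : Prop :=
  ∃ (b : Matrix (Fin m) (Fin m) k) (c : Matrix (Fin n) (Fin n) k),
    IsUnit b.det ∧ IsUnit c.det ∧
    (∀ i j, i < j → b i j = 0) ∧ (∀ i j, j < i → c i j = 0) ∧
    N = b⁻¹ * M * c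

/-
Lower-triangular row operations and upper-triangular column operations preserve the rank of
every block of rows `< a` or `≤ a` and columns `< b` or `≤ b`: such a block of `b * M * c` is the
product of the corresponding blocks of `b`, `M` and `c`, and the blocks of `b` and `c` are again
invertible triangular matrices. For a partial permutation matrix this rank is the number of ones in
the block, and by inclusion–exclusion these numbers determine every entry, so an orbit contains at
most one partial permutation matrix.

Conversely, reduce the rows from top to bottom. In the next row, take the leftmost nonzero entry as
pivot: adding multiples of its column to the columns on its right clears its row, adding multiples
of its row to the rows below clears its column, and a scaling turns it into `1`. The rows above
are untouched, because the pivot column vanishes on them (their nonzero entries are ones that are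
alone in their row and column). Finiteness follows since there are finitely many `0`–`1` matrices.
-/

open Matrix Finset

theorem Finset.sum_Iic_Iic_add_sum_Iio_Iio {α β M : Type*} [LinearOrder α]
    [LocallyFiniteOrderBot α] [LinearOrder β] [LocallyFiniteOrderBot β] [AddCommMonoid M]
    (f : α → β → M) (a : α) (b : β) :
    ∑ i ∈ Iic a, ∑ j ∈ Iic b, f i j + ∑ i ∈ Iio a, ∑ j ∈ Iio b, f i j =
      ∑ i ∈ Iic a, ∑ j ∈ Iio b, f i j + ∑ i ∈ Iio a, ∑ j ∈ Iic b, f i j + f a b := by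
  simp only [← Iio_insert, sum_insert notMem_Iio_self, sum_add_distrib]
  abel

namespace Matrix

theorem BlockTriangular.nonsing_inv {R m α : Type*} [CommRing R] [Fintype m] [DecidableEq m]
    [LinearOrder α] {M : Matrix m m R} {b : m → α} (h : M.BlockTriangular b) :
    M⁻¹.BlockTriangular b := by
  by_cases hM : IsUnit M.det
  · have := M.invertibleOfIsUnitDet hM
    exact blockTriangular_inv_of_blockTriangular h
  · rw [nonsing_inv_apply_not_isUnit _ hM]
    exact blockTriangular_zero

theorem IsLowerTriangular.toBlock_mul {R m n : Type*} [CommRing R] [Fintype m] [LinearOrder m]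
    {b : Matrix m m R} (hb : b.IsLowerTriangular) {p : m → Prop} [DecidablePred p]
    (hp : IsLowerSet {i | p i}) (X : Matrix m n R) (q : n → Prop) :
    (b * X).toBlock p q = b.toBlock p p * X.toBlock p q := by
  have : b.toBlock p (¬p ·) = 0 := by
    ext i j
    exact hb (lt_of_not_ge fun hji => j.2 (hp hji i.2))
  rw [toBlock_mul_eq_add _ p, this, Matrix.zero_mul, add_zero]

theorem IsUpperTriangular.mul_toBlock {R m n : Type*} [CommRing R] [Fintype n] [LinearOrder n]
    {c : Matrix n n R} (hc : c.IsUpperTriangular) {q : n → Prop} [DecidablePred q]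
    (hq : IsLowerSet {j | q j}) (X : Matrix m n R) (p : m → Prop) :
    (X * c).toBlock p q = X.toBlock p q * c.toBlock q q := by
  have : c.toBlock (¬q ·) q = 0 := by
    ext i j
    exact hc (lt_of_not_ge fun hij => i.2 (hq hij j.2))
  rw [toBlock_mul_eq_add _ q, this, Matrix.mul_zero, add_zero]

variable {K : Type*} [Field K] {m n : Type*}

theorem IsLowerTriangular.isUnit_det_iff [Fintype m] [LinearOrder m] {M : Matrix m m K}
    (h : M.IsLowerTriangular) : IsUnit M.det ↔ ∀ i, M i i ≠ 0 := by
  simp [det_of_isLowerTriangular M h, Finset.prod_ne_zero_iff]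

theorem IsUpperTriangular.isUnit_det_iff [Fintype m] [LinearOrder m] {M : Matrix m m K}
    (h : M.IsUpperTriangular) : IsUnit M.det ↔ ∀ i, M i i ≠ 0 := by
  simp [det_of_isUpperTriangular h, Finset.prod_ne_zero_iff]

theorem rank_toBlock_mul_mul [Fintype m] [Fintype n] [LinearOrder m] [LinearOrder n]
    {b : Matrix m m K} {c : Matrix n n K} (hb : b.IsLowerTriangular) (hbd : IsUnit b.det)
    (hc : c.IsUpperTriangular) (hcd : IsUnit c.det) {p : m → Prop} [DecidablePred p]
    {q : n → Prop} [DecidablePred q] (hp : IsLowerSet {i | p i}) (hq : IsLowerSet {j | q j})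
    (X : Matrix m n K) :
    ((b * X * c).toBlock p q).rank = (X.toBlock p q).rank := by
  have hbp : (b.toBlock p p).IsLowerTriangular := hb.submatrix
  have hcq : (c.toBlock q q).IsUpperTriangular := hc.submatrix
  rw [hc.mul_toBlock hq, hb.toBlock_mul hp, rank_mul_eq_left_of_isUnit_det,
    rank_mul_eq_right_of_isUnit_det]
  · exact hbp.isUnit_det_iff.2 fun i => hb.isUnit_det_iff.1 hbd i
  · exact hcq.isUnit_det_iff.2 fun j => hc.isUnit_det_iff.1 hcd j

theorem rank_eq_sum_of_partialPerm [Fintype m] [Fintype n] [DecidableEq K] {A : Matrix m n K}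
    (h01 : ∀ i j, A i j = 0 ∨ A i j = 1) (hrow : ∀ i j j', A i j = 1 → A i j' = 1 → j = j')
    (hcol : ∀ i i' j, A i j = 1 → A i' j = 1 → i = i') :
    A.rank = ∑ i, ∑ j, if A i j = 1 then 1 else 0 := by
  classical
  let S := {p : m × n // A p.1 p.2 = 1}
  have hS : Fintype.card S = ∑ i, ∑ j, if A i j = 1 then 1 else 0 := by
    rw [Fintype.card_subtype, card_filter, Fintype.sum_prod_type]
  rw [← hS]
  apply le_antisymm
  · have hA : A = (of fun i (p : S) => if p.1.1 = i then (1 : K) else 0) *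
        of fun (p : S) j => if p.1.2 = j then (1 : K) else 0 := by
      ext i j
      have hij : ∀ x : m × n, (x.1 = i ∧ x.2 = j) ↔ x = (i, j) := fun x => by simp [Prod.ext_iff]
      simp only [mul_apply, of_apply, ite_mul, one_mul, zero_mul, ← ite_and, hij]
      rw [← Finset.sum_subtype (univ.filter fun p : m × n => A p.1 p.2 = 1) (by simp)
        (fun x => if x = (i, j) then (1 : K) else 0), Finset.sum_ite_eq']
      rcases h01 i j with h | h <;> simp [h]
    exact (congrArg rank hA).trans_le ((rank_mul_le_right _ _).trans (rank_le_card_height _))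
  · have h1 : A.submatrix (fun p : S => p.1.1) (fun p : S => p.1.2) = 1 := by
      ext p q
      rw [submatrix_apply, one_apply]
      split_ifs with hpq
      · exact hpq ▸ p.2
      · refine (h01 _ _).resolve_right fun h => hpq (Subtype.ext (Prod.ext ?_ ?_))
        · exact hcol _ _ _ h q.2
        · exact hrow _ _ _ p.2 h
    calc Fintype.card S = (1 : Matrix S S K).rank := rank_one.symm
      _ ≤ A.rank := h1 ▸ rank_submatrix_le A _ _

section pivotReduce

variable [DecidableEq m] [DecidableEq n]

/-- Pivoting on the entry `(a, j₀)`: the rank-one update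
`N - (N a j₀)⁻¹ • vecMulVec (N.col j₀) (N.row a)` clears row `a` and column `j₀`, and the pivot is
then set to `1`. -/
def pivotReduce (N : Matrix m n K) (a : m) (j₀ : n) : Matrix m n K :=
  of fun i j => N i j - N i j₀ * N a j / N a j₀ + if i = a ∧ j = j₀ then 1 else 0

variable {N : Matrix m n K} {a i : m} {j₀ j : n}

theorem pivotReduce_apply_of_ne (hi : i ≠ a) (h : N i j₀ = 0) :
    pivotReduce N a j₀ i j = N i j := by
  simp [pivotReduce, hi, h]

theorem pivotReduce_apply_row (hp : N a j₀ ≠ 0) :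
    pivotReduce N a j₀ a j = if j = j₀ then 1 else 0 := by
  simp [pivotReduce, mul_div_cancel_left₀ _ hp]

theorem pivotReduce_apply_col (hp : N a j₀ ≠ 0) (hi : i ≠ a) : pivotReduce N a j₀ i j₀ = 0 := by
  simp [pivotReduce, hi, hp]

theorem pivotReduce_apply_eq_zero (hp : N a j₀ ≠ 0) (h : N i j = 0) (ha : N a j = 0) :
    pivotReduce N a j₀ i j = 0 := by
  have : ¬(i = a ∧ j = j₀) := by
    rintro ⟨rfl, rfl⟩
    exact hp ha
  simp [pivotReduce, h, ha, this]

theorem pivotReduce_eq_mul [Fintype m] [Fintype n] (hp : N a j₀ ≠ 0) :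
    (1 + (N a j₀)⁻¹ • vecMulVec (Pi.single a 1 - N.col j₀) (Pi.single a 1)) * N *
      (1 + vecMulVec (Pi.single j₀ 1) (Pi.single j₀ 1 - (N a j₀)⁻¹ • N.row a)) =
      pivotReduce N a j₀ := by
  simp only [Matrix.add_mul, Matrix.mul_add, Matrix.one_mul, Matrix.mul_one, Matrix.smul_mul,
    vecMulVec_mul, mul_vecMulVec, single_one_vecMul, mulVec_single_one]
  ext i j
  by_cases hi : i = a <;> by_cases hj : j = j₀ <;>
    simp only [pivotReduce, of_apply, add_apply, smul_apply, smul_eq_mul, vecMulVec_apply,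
      Pi.sub_apply, Pi.smul_apply, Pi.single_apply, col_apply, row_apply, hi, hj, and_self,
      and_true, and_false, if_true, if_false] <;> field_simp <;> ring

end pivotReduce

theorem exists_mul_mul_eq_pivotReduce [Fintype m] [Fintype n] [LinearOrder m] [LinearOrder n]
    {N : Matrix m n K} {a : m} {j₀ : n} (hp : N a j₀ ≠ 0) (hcol : ∀ i < a, N i j₀ = 0)
    (hrow : ∀ j < j₀, N a j = 0) :
    ∃ (b : Matrix m m K) (c : Matrix n n K), b.IsLowerTriangular ∧ IsUnit b.det ∧
      c.IsUpperTriangular ∧ IsUnit c.det ∧ b * N * c = pivotReduce N a j₀ := by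
  have hb : (1 + (N a j₀)⁻¹ •
      vecMulVec (Pi.single a 1 - N.col j₀) (Pi.single a 1)).IsLowerTriangular := by
    intro i i' (h : i < i')
    by_cases hi' : i' = a
    · subst hi'
      simp [vecMulVec_apply, h.ne, hcol i h]
    · simp [vecMulVec_apply, h.ne, hi']
  have hc : (1 + vecMulVec (Pi.single j₀ 1)
      (Pi.single j₀ 1 - (N a j₀)⁻¹ • N.row a)).IsUpperTriangular := by
    intro j' j (h : j < j')
    by_cases hj' : j' = j₀
    · subst hj'
      simp [vecMulVec_apply, h.ne', hrow j h]
    · simp [vecMulVec_apply, h.ne', hj']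
  refine ⟨_, _, hb, hb.isUnit_det_iff.2 fun i => ?_, hc, hc.isUnit_det_iff.2 fun j => ?_,
    pivotReduce_eq_mul hp⟩
  · by_cases hi : i = a
    · subst hi
      simp [vecMulVec_apply, mul_sub, hp]
    · simp [vecMulVec_apply, hi]
  · by_cases hj : j = j₀
    · subst hj
      simp [vecMulVec_apply, hp]
    · simp [vecMulVec_apply, hj]

def IsIsolatedOne {R : Type*} [Zero R] [One R] (N : Matrix m n R) (i : m) (j : n) : Prop :=
  N i j = 1 ∧ (∀ j', j' ≠ j → N i j' = 0) ∧ ∀ i', i' ≠ i → N i' j = 0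

end Matrix

namespace SameBorbit

variable {K : Type} [Field K] {m n : ℕ} {M N P : Matrix (Fin m) (Fin n) K}

theorem refl (M : Matrix (Fin m) (Fin n) K) : SameBorbit M M :=
  ⟨1, 1, by simp, by simp, fun _ _ h => one_apply_ne h.ne, fun _ _ h => one_apply_ne h.ne',
    by simp⟩

theorem symm (h : SameBorbit M N) : SameBorbit N M := by
  obtain ⟨b, c, hb, hc, hbl, hcu, rfl⟩ := h
  refine ⟨b⁻¹, c⁻¹, isUnit_nonsing_inv_det b hb, isUnit_nonsing_inv_det c hc,
    fun i j h => BlockTriangular.nonsing_inv (b := OrderDual.toDual) hbl h,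
    fun i j h => BlockTriangular.nonsing_inv (b := id) hcu h, ?_⟩
  rw [nonsing_inv_nonsing_inv b hb, ← Matrix.mul_assoc, ← Matrix.mul_assoc, mul_nonsing_inv b hb,
    Matrix.one_mul, Matrix.mul_assoc, mul_nonsing_inv c hc, Matrix.mul_one]

theorem trans (h₁ : SameBorbit M N) (h₂ : SameBorbit N P) : SameBorbit M P := by
  obtain ⟨b, c, hb, hc, hbl, hcu, rfl⟩ := h₁
  obtain ⟨b', c', hb', hc', hbl', hcu', rfl⟩ := h₂
  refine ⟨b * b', c * c', by simpa using hb.mul hb', by simpa using hc.mul hc',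
    fun i j h => BlockTriangular.mul (b := OrderDual.toDual) hbl hbl' h,
    fun i j h => BlockTriangular.mul (b := id) hcu hcu' h, ?_⟩
  rw [Matrix.mul_inv_rev]
  simp only [Matrix.mul_assoc]

theorem setOf_eq (h : SameBorbit M N) : {P | SameBorbit M P} = {P | SameBorbit N P} :=
  Set.ext fun _ => ⟨h.symm.trans, h.trans⟩

theorem of_mul {b : Matrix (Fin m) (Fin m) K} {c : Matrix (Fin n) (Fin n) K}
    (hb : b.IsLowerTriangular) (hbd : IsUnit b.det) (hc : c.IsUpperTriangular)
    (hcd : IsUnit c.det) : SameBorbit M (b * M * c) :=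
  ⟨b⁻¹, c, isUnit_nonsing_inv_det b hbd, hcd, fun _ _ h => hb.nonsing_inv h, fun _ _ h => hc h,
    by rw [nonsing_inv_nonsing_inv b hbd]⟩

theorem rank_toBlock_eq (h : SameBorbit M N) {p : Fin m → Prop} [DecidablePred p]
    {q : Fin n → Prop} [DecidablePred q] (hp : IsLowerSet {i | p i})
    (hq : IsLowerSet {j | q j}) : (N.toBlock p q).rank = (M.toBlock p q).rank := by
  obtain ⟨b, c, hb, hc, hbl, hcu, rfl⟩ := h
  have hbl : b.IsLowerTriangular := fun _ _ h => hbl _ _ h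
  exact rank_toBlock_mul_mul hbl.nonsing_inv (isUnit_nonsing_inv_det b hb)
    (fun _ _ h => hcu _ _ h) hc hp hq M

end SameBorbit

namespace IsPartialPerm

variable {K : Type} [Field K] {m n : ℕ} {w w' : Matrix (Fin m) (Fin n) K}

theorem rank_toBlock [DecidableEq K] (hw : IsPartialPerm w) (p : Fin m → Prop) [DecidablePred p]
    (q : Fin n → Prop) [DecidablePred q] :
    (w.toBlock p q).rank = ∑ i with p i, ∑ j with q j, if w i j = 1 then 1 else 0 := by
  rw [rank_eq_sum_of_partialPerm (A := w.toBlock p q) (fun i j => hw.1 i j)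
    (fun i j j' h h' => Subtype.ext (hw.2.1 _ _ _ h h'))
    (fun i i' j h h' => Subtype.ext (hw.2.2 _ _ _ h h')),
    Finset.sum_subtype (p := p) _ fun _ => by simp]
  refine Finset.sum_congr rfl fun i _ => ?_
  rw [Finset.sum_subtype (p := q) _ fun _ => by simp]
  rfl

theorem eq_of_sameBorbit (hw : IsPartialPerm w) (hw' : IsPartialPerm w') (h : SameBorbit w w') :
    w = w' := by
  classical
  have hcount : ∀ (p : Fin m → Prop) [DecidablePred p] (q : Fin n → Prop) [DecidablePred q],
      IsLowerSet {i | p i} → IsLowerSet {j | q j} →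
      ∑ i with p i, ∑ j with q j, (if w i j = 1 then 1 else 0) =
        ∑ i with p i, ∑ j with q j, if w' i j = 1 then 1 else 0 := by
    intro p _ q _ hp hq
    rw [← hw.rank_toBlock, ← hw'.rank_toBlock, h.rank_toBlock_eq hp hq]
  ext a b
  have hw_ab := sum_Iic_Iic_add_sum_Iio_Iio (fun i j => if w i j = 1 then 1 else 0) a b
  have hw'_ab := sum_Iic_Iic_add_sum_Iio_Iio (fun i j => if w' i j = 1 then 1 else 0) a b
  simp only [← filter_gt_eq_Iio, ← filter_ge_eq_Iic] at hw_ab hw'_ab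
  rw [hcount (· ≤ a) (· ≤ b) (isLowerSet_Iic a) (isLowerSet_Iic b),
    hcount (· < a) (· < b) (isLowerSet_Iio a) (isLowerSet_Iio b),
    hcount (· ≤ a) (· < b) (isLowerSet_Iic a) (isLowerSet_Iio b),
    hcount (· < a) (· ≤ b) (isLowerSet_Iio a) (isLowerSet_Iic b)] at hw_ab
  have : (if w a b = 1 then 1 else 0) = if w' a b = 1 then 1 else 0 := by omega
  rcases hw.1 a b with h1 | h1 <;> rcases hw'.1 a b with h2 | h2 <;> simp_all

theorem of_isIsolatedOne (h : ∀ i j, w i j ≠ 0 → w.IsIsolatedOne i j) : IsPartialPerm w := by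
  refine ⟨fun i j => or_iff_not_imp_left.2 fun hne => (h i j hne).1, fun i j j' hj hj' => ?_,
    fun i i' j hi hi' => ?_⟩
  · by_contra hne
    exact one_ne_zero (hj' ▸ (h i j (hj ▸ one_ne_zero)).2.1 j' (Ne.symm hne))
  · by_contra hne
    exact one_ne_zero (hi' ▸ (h i j (hi ▸ one_ne_zero)).2.2 i' (Ne.symm hne))

end IsPartialPerm

theorem finite_setOf_isPartialPerm (K : Type) [Field K] (m n : ℕ) :
    {w : Matrix (Fin m) (Fin n) K | IsPartialPerm w}.Finite :=
  (Set.Finite.pi' fun _ => Set.Finite.pi' fun _ => Set.toFinite {0, 1}).subset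
    fun _ hw i j => hw.1 i j

section Existence

variable {K : Type} [Field K] {m n : ℕ}

theorem exists_sameBorbit_isIsolatedOne_le {N : Matrix (Fin m) (Fin n) K} (a : Fin m)
    (h : ∀ i < a, ∀ j, N i j ≠ 0 → N.IsIsolatedOne i j) :
    ∃ N', SameBorbit N N' ∧ ∀ i ≤ a, ∀ j, N' i j ≠ 0 → N'.IsIsolatedOne i j := by
  by_cases hz : ∀ j, N a j = 0
  · refine ⟨N, .refl N, fun i hi j hne => ?_⟩
    rcases hi.lt_or_eq with hi | rfl
    · exact h i hi j hne
    · exact absurd (hz j) hne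
  obtain ⟨j₀, hp, hmin⟩ := WellFounded.has_min wellFounded_lt {j | N a j ≠ 0} (not_forall.1 hz)
  have hrow : ∀ j < j₀, N a j = 0 := fun j hj => not_not.1 fun hne => hmin j hne hj
  have hcol : ∀ i < a, N i j₀ = 0 := fun i hi =>
    not_not.1 fun hne => hp ((h i hi j₀ hne).2.2 a hi.ne')
  obtain ⟨b, c, hb, hbd, hc, hcd, he⟩ := exists_mul_mul_eq_pivotReduce hp hcol hrow
  refine ⟨pivotReduce N a j₀, he ▸ SameBorbit.of_mul hb hbd hc hcd, fun i hi j hne => ?_⟩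
  rcases hi.lt_or_eq with hi | rfl
  · have hrows : ∀ j, pivotReduce N a j₀ i j = N i j := fun j =>
      pivotReduce_apply_of_ne hi.ne (hcol i hi)
    rw [hrows] at hne
    obtain ⟨h1, hr, hc'⟩ := h i hi j hne
    exact ⟨(hrows j).trans h1, fun j' hj' => (hrows j').trans (hr j' hj'),
      fun i' hi' => pivotReduce_apply_eq_zero hp (hc' i' hi') (hc' a hi.ne')⟩
  · obtain rfl : j = j₀ := by
      by_contra hj
      simp [pivotReduce_apply_row hp, hj] at hne
    exact ⟨by simp [pivotReduce_apply_row hp],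
      fun j' hj' => by simp [pivotReduce_apply_row hp, hj'],
      fun i' hi' => pivotReduce_apply_col hp hi'⟩

theorem exists_isPartialPerm_sameBorbit (M : Matrix (Fin m) (Fin n) K) :
    ∃ w, IsPartialPerm w ∧ SameBorbit M w := by
  suffices ∀ r ≤ m, ∃ N, SameBorbit M N ∧
      ∀ i : Fin m, (i : ℕ) < r → ∀ j, N i j ≠ 0 → N.IsIsolatedOne i j by
    obtain ⟨N, hMN, hN⟩ := this m le_rfl
    exact ⟨N, IsPartialPerm.of_isIsolatedOne fun i => hN i i.2, hMN⟩
  intro r hr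
  induction r with
  | zero => exact ⟨M, .refl M, fun i hi => absurd hi (Nat.not_lt_zero _)⟩
  | succ r ih =>
    obtain ⟨N, hMN, hN⟩ := ih (Nat.le_of_succ_le hr)
    obtain ⟨N', hNN', hN'⟩ := exists_sameBorbit_isIsolatedOne_le (N := N) ⟨r, hr⟩ hN
    exact ⟨N', hMN.trans hNN', fun i hi => hN' i (Nat.lt_succ_iff.1 hi)⟩

end Existence

theorem stmt_5_general (k : Type) [Field k] (m n : ℕ) :
    (∀ M : Matrix (Fin m) (Fin n) k, ∃! w : Matrix (Fin m) (Fin n) k,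
      IsPartialPerm w ∧ SameBorbit M w) ∧
    {S : Set (Matrix (Fin m) (Fin n) k) | ∃ M, S = {N | SameBorbit M N}}.Finite := by
  refine ⟨fun M => ?_, ?_⟩
  · obtain ⟨w, hw, hMw⟩ := exists_isPartialPerm_sameBorbit M
    exact ⟨w, ⟨hw, hMw⟩, fun w' ⟨hw', hMw'⟩ => hw'.eq_of_sameBorbit hw (hMw'.symm.trans hMw)⟩
  · refine ((finite_setOf_isPartialPerm k m n).image fun w => {N | SameBorbit w N}).subset ?_
    rintro S ⟨M, rfl⟩
    obtain ⟨w, hw, hMw⟩ := exists_isPartialPerm_sameBorbit M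
    exact ⟨w, hw, hMw.setOf_eq.symm⟩

/-- over an infinite field, every `B_-(m) × B_+(n)` orbit on `Mat(m,n)`
contains exactly one partial permutation matrix; in particular there are finitely
many orbits. -/
theorem stmt_5 (k : Type) [Field k] [Infinite k] (m n : ℕ) :
    (∀ M : Matrix (Fin m) (Fin n) k, ∃! w : Matrix (Fin m) (Fin n) k,
      IsPartialPerm w ∧ SameBorbit M w) ∧
    {S : Set (Matrix (Fin m) (Fin n) k) | ∃ M, S = {N | SameBorbit M N}}.Finite :=
  stmt_5_general k m n
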